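/- arXiv:1507.02903 — 5 statements merged into one kernel-verified Lean document; each statement's English description precedes it below -/
import Mathlib

section
/- Let n, q ≥ 2 be integers with n+1 ≥ r_q, where r₂ = 4 and r_q = 3 for q ≥ 3. Then 1 + q^{n−1}((n−1)q − n − 1)/2 = Σ_{r = r_q}^{n+1} C(n+1, r) · ((r−2)(q−1)/2) · ψ_q(r), where ψ_q(r) = (−1)^{r+1}((1−q)^{r−1}−1)/q. -/
noncomputable def psiQ (q : ℕ) (r : ℕ) : ℚ :=
  (-1) ^ (r + 1) * ((1 - (q : ℚ)) ^ (r - 1) - 1) / q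

lemma sum_choose_pow (m : ℕ) (x : ℚ) :
    ∑ r ∈ Finset.range (m+1), (m.choose r : ℚ) * x ^ r = (x + 1) ^ m := by
  rw [add_pow]
  exact Finset.sum_congr rfl fun r _ => by rw [one_pow]; ring

lemma sum_succ_choose (m : ℕ) (x : ℚ) :
    ∑ r ∈ Finset.range (m+1), ((m+1).choose (r+1) : ℚ) * ((r:ℚ)+1) * x ^ r
      = ((m:ℚ)+1) * (x+1)^m := by
  have key : ∀ r : ℕ, ((m+1).choose (r+1) : ℚ) * ((r:ℚ)+1) = ((m:ℚ)+1) * (m.choose r : ℚ) := by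
    intro r
    have h' : ((m+1) * m.choose r : ℕ) = ((m+1).choose (r+1) * (r+1) : ℕ) :=
      Nat.add_one_mul_choose_eq m r
    exact_mod_cast h'.symm
  calc ∑ r ∈ Finset.range (m+1), ((m+1).choose (r+1) : ℚ) * ((r:ℚ)+1) * x ^ r
      = ∑ r ∈ Finset.range (m+1), ((m:ℚ)+1) * ((m.choose r : ℚ) * x ^ r) := by
        refine Finset.sum_congr rfl fun r _ => ?_
        rw [key r]; ring
    _ = ((m:ℚ)+1) * (x+1)^m := by rw [← Finset.mul_sum, sum_choose_pow]

lemma sum_choose_succ_mul (m : ℕ) (x : ℚ) :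
    (∑ r ∈ Finset.range (m+1), ((m+1).choose (r+1) : ℚ) * x ^ r) * x
      = (x+1)^(m+1) - 1 := by
  have h := sum_choose_pow (m+1) x
  rw [Finset.sum_range_succ'] at h
  simp only [Nat.choose_zero_right, Nat.cast_one, pow_zero, one_mul, mul_one] at h
  rw [Finset.sum_mul]
  have e : ∑ r ∈ Finset.range (m+1), ((m+1).choose (r+1) : ℚ) * x ^ r * x
       = ∑ r ∈ Finset.range (m+1), ((m+1).choose (r+1) : ℚ) * x ^ (r+1) :=
    Finset.sum_congr rfl fun r _ => by rw [pow_succ]; ring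
  rw [e]; linarith

lemma psiQ_succ (q : ℕ) (r : ℕ) :
    psiQ q (r+1) = (((q:ℚ)-1)^r - (-1:ℚ)^r) / q := by
  unfold psiQ
  simp only [Nat.add_sub_cancel]
  have e1 : ((-1:ℚ)) ^ (r + 1 + 1) = (-1)^r := by
    rw [pow_succ, pow_succ]; ring
  have e3 : ((-1:ℚ) * (1 - (q:ℚ)))^r = ((q:ℚ)-1)^r := by congr 1; ring
  have e2 : (-1:ℚ)^r * ((1 - (q:ℚ))^r - 1) = ((q:ℚ)-1)^r - (-1)^r := by
    rw [mul_sub, ← mul_pow, e3, mul_one]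
  rw [e1, e2]

/-- The genus-counting identity:
1 + q^{n−1}((n−1)q−n−1)/2 = Σ_{r=r_q}^{n+1} C(n+1,r)·((r−2)(q−1)/2)·ψ_q(r),
where r₂ = 4 and r_q = 3 for q ≥ 3. -/
theorem genus_counting (n q : ℕ) (hn : 2 ≤ n) (hq : 2 ≤ q)
    (hnr : (if q = 2 then 4 else 3) ≤ n + 1) :
    1 + (q : ℚ) ^ (n - 1) * (((n : ℚ) - 1) * q - n - 1) / 2 =
      ∑ r ∈ Finset.Icc (if q = 2 then 4 else 3) (n + 1),
        ((n + 1).choose r : ℚ) * (((r : ℚ) - 2) * ((q : ℚ) - 1) / 2) * psiQ q r := by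
  have hq0 : (q:ℚ) ≠ 0 := by positivity
  have hq1 : (2:ℚ) ≤ (q:ℚ) := by exact_mod_cast hq
  have hy0 : (q:ℚ) - 1 ≠ 0 := by linarith
  set f : ℕ → ℚ := fun r =>
    ((n + 1).choose r : ℚ) * (((r : ℚ) - 2) * ((q : ℚ) - 1) / 2) * psiQ q r with hf
  have hsub : Finset.Icc (if q = 2 then 4 else 3) (n + 1) ⊆ Finset.range (n + 2) := by
    intro x hx
    simp only [Finset.mem_Icc, Finset.mem_range] at *
    omega
  have hzero : ∀ x ∈ Finset.range (n + 2),
      x ∉ Finset.Icc (if q = 2 then 4 else 3) (n + 1) → f x = 0 := by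
    intro x hx hnx
    simp only [Finset.mem_Icc, Finset.mem_range] at hx hnx
    by_cases h2 : q = 2
    · subst h2
      rw [if_pos rfl] at hnx
      have hx4 : x < 4 := by omega
      interval_cases x <;> norm_num [hf, psiQ]
    · rw [if_neg h2] at hnx
      have hx3 : x < 3 := by omega
      interval_cases x <;> norm_num [hf, psiQ]
  rw [Finset.sum_subset hsub hzero, Finset.sum_range_succ']
  have hf0 : f 0 = 0 := by norm_num [hf, psiQ]
  rw [hf0, add_zero]
  have hterm : ∀ r ∈ Finset.range (n+1), f (r+1) =
      ((q:ℚ)-1)/(2*q) * (((n+1).choose (r+1) : ℚ) * ((r:ℚ)+1) * ((q:ℚ)-1)^r)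
      - ((q:ℚ)-1)/q * (((n+1).choose (r+1) : ℚ) * ((q:ℚ)-1)^r)
      - ((q:ℚ)-1)/(2*q) * (((n+1).choose (r+1) : ℚ) * ((r:ℚ)+1) * (-1:ℚ)^r)
      + ((q:ℚ)-1)/q * (((n+1).choose (r+1) : ℚ) * (-1:ℚ)^r) := by
    intro r _
    simp only [hf, psiQ_succ]
    push_cast
    field_simp
    ring
  rw [Finset.sum_congr rfl hterm, Finset.sum_add_distrib, Finset.sum_sub_distrib,
      Finset.sum_sub_distrib, ← Finset.mul_sum, ← Finset.mul_sum, ← Finset.mul_sum,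
      ← Finset.mul_sum]
  have hT1 := sum_succ_choose n ((q:ℚ)-1)
  have hT2 := sum_choose_succ_mul n ((q:ℚ)-1)
  have hT3 := sum_succ_choose n (-1:ℚ)
  have hT4 := sum_choose_succ_mul n (-1:ℚ)
  rw [show ((q:ℚ)-1+1) = (q:ℚ) by ring] at hT1 hT2
  rw [show ((-1:ℚ)+1) = 0 by ring, zero_pow (by omega : n ≠ 0), mul_zero] at hT3
  rw [show ((-1:ℚ)+1) = 0 by ring, zero_pow (by omega : n + 1 ≠ 0)] at hT4
  have hT4' : (∑ r ∈ Finset.range (n+1), ((n+1).choose (r+1) : ℚ) * (-1:ℚ)^r) = 1 := by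
    have := hT4
    linarith
  have hT2' : (∑ r ∈ Finset.range (n+1), ((n+1).choose (r+1) : ℚ) * ((q:ℚ)-1)^r)
      = ((q:ℚ)^(n+1) - 1) / ((q:ℚ)-1) := by
    rw [eq_div_iff hy0]
    exact hT2
  rw [hT1, hT2', hT3, hT4']
  obtain ⟨k, rfl⟩ : ∃ k, n = k + 2 := ⟨n - 2, by omega⟩
  have hpow : (q:ℚ) ^ (k + 2 - 1) = (q:ℚ)^(k+1) := by norm_num
  rw [hpow]
  push_cast
  field_simp
  ring
end

section
/- For every even integer n ≥ 6: Σ_{j=1}^{(n−2)/2} C(n+1, 2j−1) · (n−2j)/2 = 1 + (n−3)·2^{n−2}. -/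
open Finset

/-- Split a sum over `range (2*t)` by parity. -/
private lemma sum_range_two_mul_split (f : ℕ → ℤ) (t : ℕ) :
    ∑ k ∈ range (2 * t), f k =
      (∑ i ∈ range t, f (2 * i)) + ∑ i ∈ range t, f (2 * i + 1) := by
  induction t with
  | zero => simp
  | succ t ih =>
    have h : 2 * (t + 1) = (2 * t) + 1 + 1 := by ring
    rw [h, sum_range_succ, sum_range_succ, ih, sum_range_succ, sum_range_succ]
    ring

private lemma sum_id_mul_choose (N : ℕ) (hN : 1 ≤ N) :
    ∑ k ∈ range (N + 1), (k : ℤ) * (N.choose k : ℤ) = (N : ℤ) * 2 ^ (N - 1) := by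
  obtain ⟨p, rfl⟩ : ∃ p, N = p + 1 := ⟨N - 1, by omega⟩
  rw [Finset.sum_range_succ']
  have h : ∀ k ∈ range (p + 1),
      ((k + 1 : ℕ) : ℤ) * ((p + 1).choose (k + 1) : ℤ)
        = ((p + 1 : ℕ) : ℤ) * (p.choose k : ℤ) := by
    intro k _
    have h1 : (p + 1) * p.choose k = (p + 1).choose (k + 1) * (k + 1) :=
      Nat.add_one_mul_choose_eq p k
    have h2 : ((p + 1 : ℕ) : ℤ) * (p.choose k : ℤ)
        = ((p + 1).choose (k + 1) : ℤ) * ((k + 1 : ℕ) : ℤ) := by exact_mod_cast h1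
    push_cast at h2 ⊢
    linarith
  rw [Finset.sum_congr rfl h]
  rw [← Finset.mul_sum]
  have : ∑ k ∈ range (p + 1), (p.choose k : ℤ) = 2 ^ p := by
    exact_mod_cast congrArg (Nat.cast : ℕ → ℤ) (Nat.sum_range_choose p)
  simp [this]

private lemma alt_sum_id_mul_choose (N : ℕ) (hN : 2 ≤ N) :
    ∑ k ∈ range (N + 1), (-1 : ℤ) ^ k * k * (N.choose k : ℤ) = 0 := by
  obtain ⟨p, rfl⟩ : ∃ p, N = p + 1 := ⟨N - 1, by omega⟩
  rw [Finset.sum_range_succ']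
  have h : ∀ k ∈ range (p + 1),
      (-1 : ℤ) ^ (k + 1) * ((k + 1 : ℕ) : ℤ) * ((p + 1).choose (k + 1) : ℤ)
        = (-(p + 1 : ℕ) : ℤ) * ((-1 : ℤ) ^ k * (p.choose k : ℤ)) := by
    intro k _
    have h1 : (p + 1) * p.choose k = (p + 1).choose (k + 1) * (k + 1) :=
      Nat.add_one_mul_choose_eq p k
    have h2 : ((p + 1 : ℕ) : ℤ) * (p.choose k : ℤ)
        = ((p + 1).choose (k + 1) : ℤ) * ((k + 1 : ℕ) : ℤ) := by exact_mod_cast h1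
    push_cast at h2 ⊢
    linear_combination ((-1 : ℤ) ^ k) * h2
  rw [Finset.sum_congr rfl h, ← Finset.mul_sum]
  have h0 : p ≠ 0 := by omega
  have := Int.alternating_sum_range_choose_of_ne h0
  simp [this]

/-- Sum of odd-index binomial coefficients of `2*m+1`, in ℤ. -/
private lemma odd_choose_sum (m : ℕ) :
    ∑ i ∈ range (m + 1), ((2 * m + 1).choose (2 * i + 1) : ℤ) = 2 ^ (2 * m) := by
  have hsplit := sum_range_two_mul_split (fun k => ((2 * m + 1).choose k : ℤ)) (m + 1)
  have htot : ∑ k ∈ range (2 * (m + 1)), ((2 * m + 1).choose k : ℤ) = 2 ^ (2 * m + 1) := by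
    have h : (2 * (m + 1)) = (2 * m + 1) + 1 := by ring
    rw [h]
    exact_mod_cast congrArg (Nat.cast : ℕ → ℤ) (Nat.sum_range_choose (2 * m + 1))
  have halt := sum_range_two_mul_split
    (fun k => (-1 : ℤ) ^ k * ((2 * m + 1).choose k : ℤ)) (m + 1)
  have halt' : ∑ k ∈ range (2 * (m + 1)), (-1 : ℤ) ^ k * ((2 * m + 1).choose k : ℤ) = 0 := by
    have h : (2 * (m + 1)) = (2 * m + 1) + 1 := by ring
    rw [h]
    exact Int.alternating_sum_range_choose_of_ne (by omega)
  have he : ∀ i ∈ range (m + 1),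
      (-1 : ℤ) ^ (2 * i) * ((2 * m + 1).choose (2 * i) : ℤ)
        = ((2 * m + 1).choose (2 * i) : ℤ) := by
    intro i _; rw [pow_mul]; simp
  have ho : ∀ i ∈ range (m + 1),
      (-1 : ℤ) ^ (2 * i + 1) * ((2 * m + 1).choose (2 * i + 1) : ℤ)
        = -((2 * m + 1).choose (2 * i + 1) : ℤ) := by
    intro i _; rw [pow_succ, pow_mul]; simp
  rw [Finset.sum_congr rfl he, Finset.sum_congr rfl ho, Finset.sum_neg_distrib] at halt
  rw [htot] at hsplit
  rw [halt'] at halt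
  have hp : (2 : ℤ) ^ (2 * m + 1) = 2 * 2 ^ (2 * m) := by rw [pow_succ]; ring
  rw [hp] at hsplit
  linarith [hsplit, halt]

/-- Weighted sum of odd-index binomial coefficients of `2*m+1`, in ℤ. -/
private lemma odd_weighted_choose_sum (m : ℕ) (hm : 1 ≤ m) :
    ∑ i ∈ range (m + 1), (2 * (i : ℤ) + 1) * ((2 * m + 1).choose (2 * i + 1) : ℤ)
      = (2 * (m : ℤ) + 1) * 2 ^ (2 * m - 1) := by
  have hsplit := sum_range_two_mul_split
    (fun k => (k : ℤ) * ((2 * m + 1).choose k : ℤ)) (m + 1)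
  have htot : ∑ k ∈ range (2 * (m + 1)), (k : ℤ) * ((2 * m + 1).choose k : ℤ)
      = (2 * (m : ℤ) + 1) * 2 ^ (2 * m) := by
    have h1 : (2 * (m + 1)) = (2 * m + 1) + 1 := by ring
    have h2 := sum_id_mul_choose (2 * m + 1) (by omega)
    rw [h1]
    rw [h2]
    push_cast
    ring_nf
  have halt := sum_range_two_mul_split
    (fun k => (-1 : ℤ) ^ k * (k : ℤ) * ((2 * m + 1).choose k : ℤ)) (m + 1)
  have halt' : ∑ k ∈ range (2 * (m + 1)),
      (-1 : ℤ) ^ k * (k : ℤ) * ((2 * m + 1).choose k : ℤ) = 0 := by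
    have h1 : (2 * (m + 1)) = (2 * m + 1) + 1 := by ring
    rw [h1]
    exact alt_sum_id_mul_choose (2 * m + 1) (by omega)
  have he : ∀ i ∈ range (m + 1),
      (-1 : ℤ) ^ (2 * i) * ((2 * i : ℕ) : ℤ) * ((2 * m + 1).choose (2 * i) : ℤ)
        = ((2 * i : ℕ) : ℤ) * ((2 * m + 1).choose (2 * i) : ℤ) := by
    intro i _; rw [pow_mul]; simp
  have ho : ∀ i ∈ range (m + 1),
      (-1 : ℤ) ^ (2 * i + 1) * ((2 * i + 1 : ℕ) : ℤ) * ((2 * m + 1).choose (2 * i + 1) : ℤ)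
        = -(((2 * i + 1 : ℕ) : ℤ) * ((2 * m + 1).choose (2 * i + 1) : ℤ)) := by
    intro i _; rw [pow_succ, pow_mul]; push_cast; ring
  rw [Finset.sum_congr rfl he, Finset.sum_congr rfl ho, Finset.sum_neg_distrib] at halt
  rw [htot] at hsplit
  rw [halt'] at halt
  have hcongr : ∀ i ∈ range (m + 1),
      ((2 * i + 1 : ℕ) : ℤ) * ((2 * m + 1).choose (2 * i + 1) : ℤ)
        = (2 * (i : ℤ) + 1) * ((2 * m + 1).choose (2 * i + 1) : ℤ) := by
    intro i _; push_cast; ring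
  rw [Finset.sum_congr rfl hcongr] at hsplit halt
  have hpow : (2 : ℤ) ^ (2 * m) = 2 * 2 ^ (2 * m - 1) := by
    have h : 2 * m = (2 * m - 1) + 1 := by omega
    conv_lhs => rw [h]
    rw [pow_succ]; ring
  rw [hpow] at hsplit
  linarith [hsplit, halt]

private lemma aux_sum (m : ℕ) (hm : 3 ≤ m) :
    ∑ i ∈ range (m - 1), ((2 * m + 1).choose (2 * i + 1) : ℤ) * ((m : ℤ) - 1 - (i : ℤ))
      = 1 + (2 * (m : ℤ) - 3) * 2 ^ (2 * m - 2) := by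
  have key : ∑ i ∈ range (m + 1), ((2 * m + 1).choose (2 * i + 1) : ℤ) * ((m : ℤ) - 1 - i)
      = (∑ i ∈ range (m - 1), ((2 * m + 1).choose (2 * i + 1) : ℤ) * ((m : ℤ) - 1 - i)) - 1 := by
    have h1 : m + 1 = (m - 1) + 1 + 1 := by omega
    conv_lhs => rw [h1]
    rw [sum_range_succ, sum_range_succ]
    have hm1 : ((m - 1 : ℕ) : ℤ) = (m : ℤ) - 1 := by
      push_cast [Nat.cast_sub (by omega : 1 ≤ m)]; ring
    have h2 : 2 * ((m - 1) + 1) + 1 = 2 * m + 1 := by omega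
    rw [h2, Nat.choose_self]
    push_cast [hm1]
    ring
  have hO := odd_choose_sum m
  have hW := odd_weighted_choose_sum m (by omega)
  have hexp : ∑ i ∈ range (m + 1), ((2 * m + 1).choose (2 * i + 1) : ℤ) * ((m : ℤ) - 1 - i)
      = ((m : ℤ) - 1) * (∑ i ∈ range (m + 1), ((2 * m + 1).choose (2 * i + 1) : ℤ))
        - (∑ i ∈ range (m + 1), (i : ℤ) * ((2 * m + 1).choose (2 * i + 1) : ℤ)) := by
    rw [Finset.mul_sum, ← Finset.sum_sub_distrib]
    refine Finset.sum_congr rfl fun i _ => by ring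
  have hw2 : 2 * (∑ i ∈ range (m + 1), (i : ℤ) * ((2 * m + 1).choose (2 * i + 1) : ℤ))
      = (2 * (m : ℤ) + 1) * 2 ^ (2 * m - 1) - 2 ^ (2 * m) := by
    have hsum : ∑ i ∈ range (m + 1),
        (2 * (i : ℤ) + 1) * ((2 * m + 1).choose (2 * i + 1) : ℤ)
        = 2 * (∑ i ∈ range (m + 1), (i : ℤ) * ((2 * m + 1).choose (2 * i + 1) : ℤ))
          + ∑ i ∈ range (m + 1), ((2 * m + 1).choose (2 * i + 1) : ℤ) := by
      rw [Finset.mul_sum, ← Finset.sum_add_distrib]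
      refine Finset.sum_congr rfl fun i _ => by ring
    rw [hW, hO] at hsum
    linarith
  have hp1 : (2 : ℤ) ^ (2 * m) = 4 * 2 ^ (2 * m - 2) := by
    have h : 2 * m = (2 * m - 2) + 2 := by omega
    conv_lhs => rw [h]
    rw [pow_add]; ring
  have hp2 : (2 : ℤ) ^ (2 * m - 1) = 2 * 2 ^ (2 * m - 2) := by
    have h : 2 * m - 1 = (2 * m - 2) + 1 := by omega
    conv_lhs => rw [h]
    rw [pow_add]; ring
  rw [hO] at hexp
  rw [hp1, hp2] at hw2
  rw [hp1] at hexp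
  rw [hexp] at key
  -- key :  (m-1)*(4*t) - O1 = partial - 1,  hw2 : 2*O1 = (2m+1)*(2t) - 4t
  nlinarith [key, hw2]

/-- For every even n ≥ 6: Σ_{j=1}^{(n−2)/2} C(n+1, 2j−1)·(n−2j)/2 = 1 + (n−3)·2^{n−2}.
All divisions are exact since n is even. -/
theorem genus_sum_even (n : ℕ) (hn : 6 ≤ n) (hev : Even n) :
    ∑ j ∈ Finset.Icc 1 ((n - 2) / 2), (n + 1).choose (2 * j - 1) * ((n - 2 * j) / 2) =
      1 + (n - 3) * 2 ^ (n - 2) := by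
  obtain ⟨m, rfl⟩ := hev
  have hm : 3 ≤ m := by omega
  have h1 : (m + m - 2) / 2 = m - 1 := by omega
  have h2 : m + m + 1 = 2 * m + 1 := by omega
  rw [h1, h2]
  have hIcc : Finset.Icc 1 (m - 1) = Finset.Ico 1 m := by
    rw [← Finset.Ico_add_one_right_eq_Icc]; congr 1; omega
  have h3 : ∀ j ∈ Finset.Ico 1 m,
      (2 * m + 1).choose (2 * j - 1) * ((m + m - 2 * j) / 2)
        = (2 * m + 1).choose (2 * j - 1) * (m - j) := by
    intro j hj
    congr 1
    omega
  rw [hIcc, Finset.sum_congr rfl h3, Finset.sum_Ico_eq_sum_range]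
  have h4 : ∀ i ∈ range (m - 1),
      (2 * m + 1).choose (2 * (1 + i) - 1) * (m - (1 + i))
        = (2 * m + 1).choose (2 * i + 1) * (m - 1 - i) := by
    intro i hi
    have h5 : 2 * (1 + i) - 1 = 2 * i + 1 := by omega
    rw [h5]
    congr 1
    omega
  rw [Finset.sum_congr rfl h4]
  have hz := aux_sum m hm
  have hcast : (↑(∑ i ∈ range (m - 1), (2 * m + 1).choose (2 * i + 1) * (m - 1 - i)) : ℤ)
      = ∑ i ∈ range (m - 1), ((2 * m + 1).choose (2 * i + 1) : ℤ) * ((m : ℤ) - 1 - (i : ℤ)) := by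
    push_cast
    refine Finset.sum_congr rfl fun i hi => ?_
    have hi' : i < m - 1 := Finset.mem_range.mp hi
    have h6 : ((m - 1 - i : ℕ) : ℤ) = (m : ℤ) - 1 - (i : ℤ) := by
      have h5 : i ≤ m - 1 := by omega
      push_cast [Nat.cast_sub h5, Nat.cast_sub (by omega : 1 ≤ m)]
      ring
    rw [h6]
  have hrhs : ((1 + (m + m - 3) * 2 ^ (m + m - 2) : ℕ) : ℤ)
      = 1 + (2 * (m : ℤ) - 3) * 2 ^ (2 * m - 2) := by
    have h6 : m + m - 3 = 2 * m - 3 := by omega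
    have h7 : m + m - 2 = 2 * m - 2 := by omega
    rw [h6, h7]
    push_cast [Nat.cast_sub (by omega : 3 ≤ 2 * m)]
    ring
  have hfin : ((∑ i ∈ range (m - 1), (2 * m + 1).choose (2 * i + 1) * (m - 1 - i) : ℕ) : ℤ)
      = ((1 + (m + m - 3) * 2 ^ (m + m - 2) : ℕ) : ℤ) := by
    rw [hcast, hrhs, hz]
  exact_mod_cast hfin
end

section
/- For every odd integer n ≥ 7: Σ_{j=0}^{(n−3)/2} C(n+1, 2j) · (n−1−2j)/2 = 1 + (n−3)·2^{n−2}. -/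
open Finset

lemma sum_ite_even_reindex (f : ℕ → ℤ) (M : ℕ) :
    ∑ k ∈ range (2*M+1), (if Even k then f k else 0) = ∑ j ∈ range (M+1), f (2*j) := by
  induction M with
  | zero => simp
  | succ m ih =>
    have h : 2*(m+1)+1 = (2*m+1)+1+1 := by ring
    rw [h, sum_range_succ, sum_range_succ, ih, sum_range_succ]
    have h1 : ¬ Even (2*m+1) := by simp [parity_simps]
    have h2 : Even (2*m+1+1) := ⟨m+1, by ring⟩
    have h3 : 2*m+1+1 = 2*(m+1) := by ring
    simp only [h1, h2, h3, if_true, if_false, if_pos, if_neg, add_zero]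
    rw [sum_range_succ, sum_range_succ, if_pos (show Even (2*(m+1)) from ⟨m+1, by ring⟩)]

lemma sum_choose_int (n : ℕ) : ∑ k ∈ range (n+1), ((n.choose k : ℤ)) = 2^n := by
  exact_mod_cast congrArg (Nat.cast (R := ℤ)) (Nat.sum_range_choose n)

lemma weighted_choose (n : ℕ) :
    ∑ k ∈ range (n+2), (k:ℤ) * (n+1).choose k = (n+1) * 2^n := by
  rw [Finset.sum_range_succ']
  simp only [Nat.cast_zero, zero_mul, add_zero]
  have h : ∀ i ∈ range (n+1), ((i+1 : ℕ):ℤ) * ((n+1).choose (i+1)) = (n+1) * (n.choose i) := by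
    intro i _
    have h := Nat.add_one_mul_choose_eq n i
    have h' : ((n+1 : ℕ) * n.choose i : ℤ) = ((n+1).choose (i+1) * (i+1) : ℕ) := by
      exact_mod_cast congrArg (Nat.cast (R := ℤ)) h
    push_cast at h' ⊢
    linarith [h']
  rw [sum_congr rfl h, ← mul_sum, sum_choose_int]

lemma alt_weighted_choose (n : ℕ) (hn : 1 ≤ n) :
    ∑ k ∈ range (n+2), (-1:ℤ)^k * ((k:ℤ) * (n+1).choose k) = 0 := by
  rw [Finset.sum_range_succ']
  simp only [Nat.cast_zero, zero_mul, mul_zero, add_zero, pow_zero]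
  have h : ∀ i ∈ range (n+1), (-1:ℤ)^(i+1) * (((i+1 : ℕ):ℤ) * ((n+1).choose (i+1)))
      = (-(n:ℤ)-1) * ((-1)^i * (n.choose i)) := by
    intro i _
    have h := Nat.add_one_mul_choose_eq n i
    have h' : ((n+1 : ℕ) * n.choose i : ℤ) = ((n+1).choose (i+1) * (i+1) : ℕ) := by
      exact_mod_cast congrArg (Nat.cast (R := ℤ)) h
    push_cast at h' ⊢
    rw [pow_succ]
    linear_combination ((-1:ℤ)^i) * h'
  rw [sum_congr rfl h, ← mul_sum, Int.alternating_sum_range_choose]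
  rw [if_neg (by omega)]
  ring

lemma even_sum_choose (M : ℕ) :
    ∑ j ∈ range (M+2), ((2*M+2).choose (2*j) : ℤ) = 2^(2*M+1) := by
  have hr := sum_ite_even_reindex (fun k => 2 * ((2*M+2).choose k : ℤ)) (M+1)
  have e1 : 2*(M+1)+1 = 2*M+3 := by ring
  have e2 : (M+1)+1 = M+2 := rfl
  rw [e1, e2] at hr
  have key : ∑ k ∈ range (2*M+3), (if Even k then 2*((2*M+2).choose k:ℤ) else 0)
      = ∑ k ∈ range (2*M+3), ((1+(-1:ℤ)^k) * (2*M+2).choose k) := by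
    refine sum_congr rfl fun k _ => ?_
    rcases Nat.even_or_odd k with h | h
    · rw [if_pos h, h.neg_one_pow]; ring
    · have hne : ¬ Even k := by rw [Nat.even_iff]; rw [Nat.odd_iff] at h; omega
      rw [if_neg hne, h.neg_one_pow]; ring
  have split : ∑ k ∈ range (2*M+3), ((1+(-1:ℤ)^k) * (2*M+2).choose k)
      = (∑ k ∈ range (2*M+3), ((2*M+2).choose k : ℤ))
        + ∑ k ∈ range (2*M+3), ((-1:ℤ)^k * (2*M+2).choose k) := by
    rw [← sum_add_distrib]
    exact sum_congr rfl fun k _ => by ring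
  have s1 : ∑ k ∈ range (2*M+3), ((2*M+2).choose k : ℤ) = 2^(2*M+2) := by
    have := sum_choose_int (2*M+2); simpa using this
  have s2 : ∑ k ∈ range (2*M+3), ((-1:ℤ)^k * (2*M+2).choose k) = 0 := by
    have := Int.alternating_sum_range_choose (n := 2*M+2)
    simpa using this
  rw [key, split, s1, s2, add_zero] at hr
  have : (2:ℤ) * ∑ j ∈ range (M+2), ((2*M+2).choose (2*j) : ℤ) = 2^(2*M+2) := by
    rw [mul_sum]; exact hr.symm
  have p : (2:ℤ)^(2*M+2) = 2 * 2^(2*M+1) := by ring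
  linarith [this, p]

lemma even_weighted_choose (M : ℕ) :
    ∑ j ∈ range (M+2), (j:ℤ) * (2*M+2).choose (2*j) = (M+1) * 2^(2*M) := by
  have hr := sum_ite_even_reindex (fun k => 2 * ((k:ℤ) * (2*M+2).choose k)) (M+1)
  have e1 : 2*(M+1)+1 = 2*M+3 := by ring
  have e2 : (M+1)+1 = M+2 := rfl
  rw [e1, e2] at hr
  have key : ∑ k ∈ range (2*M+3), (if Even k then 2*((k:ℤ) * (2*M+2).choose k) else 0)
      = ∑ k ∈ range (2*M+3), ((1+(-1:ℤ)^k) * ((k:ℤ) * (2*M+2).choose k)) := by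
    refine sum_congr rfl fun k _ => ?_
    rcases Nat.even_or_odd k with h | h
    · rw [if_pos h, h.neg_one_pow]; ring
    · have hne : ¬ Even k := by rw [Nat.even_iff]; rw [Nat.odd_iff] at h; omega
      rw [if_neg hne, h.neg_one_pow]; ring
  have split : ∑ k ∈ range (2*M+3), ((1+(-1:ℤ)^k) * ((k:ℤ) * (2*M+2).choose k))
      = (∑ k ∈ range (2*M+3), ((k:ℤ) * (2*M+2).choose k))
        + ∑ k ∈ range (2*M+3), ((-1:ℤ)^k * ((k:ℤ) * (2*M+2).choose k)) := by
    rw [← sum_add_distrib]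
    exact sum_congr rfl fun k _ => by ring
  have s1 : ∑ k ∈ range (2*M+3), ((k:ℤ) * (2*M+2).choose k) = (2*M+2) * 2^(2*M+1) := by
    have := weighted_choose (2*M+1)
    push_cast at this ⊢
    convert this using 2 <;> ring
  have s2 : ∑ k ∈ range (2*M+3), ((-1:ℤ)^k * ((k:ℤ) * (2*M+2).choose k)) = 0 := by
    have := alt_weighted_choose (2*M+1) (by omega)
    convert this using 2 <;> ring
  rw [key, split, s1, s2, add_zero] at hr
  have h4 : (4:ℤ) * ∑ j ∈ range (M+2), (j:ℤ) * (2*M+2).choose (2*j)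
      = ((2*M:ℤ)+2) * 2^(2*M+1) := by
    rw [mul_sum]
    calc ∑ j ∈ range (M+2), (4:ℤ) * ((j:ℤ) * (2*M+2).choose (2*j))
        = ∑ j ∈ range (M+2), 2 * (((2*j : ℕ):ℤ) * (2*M+2).choose (2*j)) := by
          refine sum_congr rfl fun j _ => ?_
          push_cast; ring
      _ = ((2*M:ℤ)+2) * 2^(2*M+1) := hr.symm
  have p : (2:ℤ)^(2*M+1) = 2 * 2^(2*M) := by ring
  nlinarith [h4, p]

/-- For every odd n ≥ 7: Σ_{j=0}^{(n−3)/2} C(n+1, 2j)·(n−1−2j)/2 = 1 + (n−3)·2^{n−2}.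
All divisions are exact since n is odd. -/
theorem genus_sum_odd (n : ℕ) (hn : 7 ≤ n) (hodd : Odd n) :
    ∑ j ∈ Finset.Icc 0 ((n - 3) / 2), (n + 1).choose (2 * j) * ((n - 1 - 2 * j) / 2) =
      1 + (n - 3) * 2 ^ (n - 2) := by
  obtain ⟨m, rfl⟩ : ∃ m, n = 2*m+7 := by
    obtain ⟨k, hk⟩ := hodd; exact ⟨k-3, by omega⟩
  have h1 : (2*m+7-3)/2 = m+2 := by omega
  have h4 : 2*m+7-3 = 2*m+4 := by omega
  have h5 : 2*m+7-2 = 2*m+5 := by omega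
  rw [h1, h4, h5]
  have h2 : Finset.Icc 0 (m+2) = range (m+3) := by
    ext x; simp; omega
  rw [h2]
  have h3 : ∀ j ∈ range (m+3), (2*m+7+1).choose (2*j) * ((2*m+7-1-2*j)/2)
      = (2*m+8).choose (2*j) * (m+3-j) := by
    intro j hj
    simp only [mem_range] at hj
    congr 1
    omega
  rw [sum_congr rfl h3]
  -- cast to ℤ
  have key : ((∑ j ∈ range (m+3), (2*m+8).choose (2*j) * (m+3-j) : ℕ) : ℤ)
      = 1 + (2*(m:ℤ)+4)*2^(2*m+5) := by
    push_cast
    have hc : ∀ j ∈ range (m+3), (((2*m+8).choose (2*j) : ℤ)) * ((m+3-j : ℕ) : ℤ)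
        = ((2*m+8).choose (2*j) : ℤ) * ((m:ℤ)+3-j) := by
      intro j hj
      simp only [mem_range] at hj
      congr 1
      omega
    rw [sum_congr rfl hc]
    have A := even_sum_choose (m+3)
    have B := even_weighted_choose (m+3)
    have eM : 2*(m+3)+2 = 2*m+8 := by ring
    have eR : (m+3)+2 = m+5 := rfl
    rw [eM, eR] at A B
    push_cast at A B
    have ext : ∑ j ∈ range (m+5), ((2*m+8).choose (2*j) : ℤ) * ((m:ℤ)+3-j)
        = (∑ j ∈ range (m+3), ((2*m+8).choose (2*j) : ℤ) * ((m:ℤ)+3-j)) - 1 := by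
      rw [sum_range_succ, sum_range_succ]
      have c1 : ((2*m+8).choose (2*(m+3)) : ℤ) * ((m:ℤ)+3-(m+3:ℕ)) = 0 := by
        push_cast; ring
      have c2 : ((2*m+8).choose (2*(m+4)) : ℤ) * ((m:ℤ)+3-(m+4:ℕ)) = -1 := by
        rw [show 2*(m+4) = 2*m+8 from by ring, Nat.choose_self]
        push_cast; ring
      rw [c1, c2]; ring
    have lin : ∑ j ∈ range (m+5), ((2*m+8).choose (2*j) : ℤ) * ((m:ℤ)+3-j)
        = ((m:ℤ)+3) * (∑ j ∈ range (m+5), ((2*m+8).choose (2*j) : ℤ))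
          - ∑ j ∈ range (m+5), (j:ℤ) * (2*m+8).choose (2*j) := by
      rw [mul_sum, ← sum_sub_distrib]
      refine sum_congr rfl fun j _ => by ring
    rw [A, B] at lin
    rw [ext] at lin
    have : ∑ j ∈ range (m+3), ((2*m+8).choose (2*j) : ℤ) * ((m:ℤ)+3-j)
        = ((m:ℤ)+3) * 2^(2*(m+3)+1) - ((m:ℤ)+3+1) * 2^(2*(m+3)) + 1 := by
      push_cast at lin
      linarith [lin]
    rw [this]
    ring
  exact_mod_cast key
end

section
/- Let G ≅ (ℤ/p)^n with p prime and let H₀ = ⟨a₁, …, a_n⟩, a_{n+1} = (a₁a₂⋯a_n)^{−1}. The number of subgroups H ≤ G of index p (i.e. H ≅ (ℤ/p)^{n−1}) containing exactly the generators a_j with j in a fixed subset T ⊆ {1,…,n+1} of size n+1−r (and containing no a_j for j ∉ T, nor any nontrivial power of them) equals ψ_p(r), the number of tuples (α₂,…,α_r) with α_j ∈ {1,…,p−1} and α₂+⋯+α_r ≡ −1 (mod p). -/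
/-- ψ_p(r): the number of tuples (α₂, …, α_r) with each α_j ∈ {1,…,p−1}
and α₂ + ⋯ + α_r ≡ −1 (mod p). -/
def psi (q r : ℕ) : ℕ :=
  Fintype.card {f : Fin (r - 1) → (Finset.Icc 1 (q - 1)) // q ∣ (∑ j, ((f j : ℕ))) + 1}

/-- The standard generators a₁,…,a_n, a_{n+1} of G = (ℤ/p)ⁿ with a₁⋯a_{n+1} = 1. -/
def stdGen (p n : ℕ) (i : Fin (n + 1)) : Fin n → ZMod p :=
  if h : (i : ℕ) < n then Pi.single ⟨i, h⟩ 1 else fun _ => -1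

section
section Aux
variable {p n : ℕ}

def phiMap (c : Fin n → ZMod p) : (Fin n → ZMod p) →+ ZMod p where
  toFun x := ∑ i, c i * x i
  map_zero' := by simp
  map_add' x y := by simp [mul_add, Finset.sum_add_distrib]

lemma phiMap_apply (c x : Fin n → ZMod p) : phiMap c x = ∑ i, c i * x i := rfl

lemma phiMap_single (c : Fin n → ZMod p) (i : Fin n) (t : ZMod p) :
    phiMap c (Pi.single i t) = c i * t := by
  simp [phiMap_apply, Pi.single_apply, mul_ite, Finset.sum_ite_eq']

lemma phiMap_smul (c : Fin n → ZMod p) (m : ZMod p) (x : Fin n → ZMod p) :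
    phiMap c (m • x) = m * phiMap c x := by
  simp [phiMap_apply, Finset.mul_sum, smul_eq_mul, mul_left_comm]

lemma stdGen_castSucc (i : Fin n) : stdGen p n i.castSucc = Pi.single i 1 := by
  have h : ((i.castSucc : ℕ)) < n := by simp
  have he : (⟨(i.castSucc : ℕ), h⟩ : Fin n) = i := Fin.ext rfl
  unfold stdGen
  rw [dif_pos h, he]

lemma stdGen_last : stdGen p n (Fin.last n) = fun _ => -1 := by
  unfold stdGen
  rw [dif_neg (by simp)]

lemma phiMap_stdGen (d : Fin (n + 1) → ZMod p) (hsum : ∑ j, d j = 0) (j : Fin (n + 1)) :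
    phiMap (fun i => d i.castSucc) (stdGen p n j) = d j := by
  unfold stdGen
  split
  · next h =>
    show phiMap (fun i => d i.castSucc) (Pi.single ⟨(j : ℕ), h⟩ 1) = d j
    rw [phiMap_single, mul_one]
    show d (Fin.castSucc ⟨(j : ℕ), h⟩) = d j
    exact congrArg d (Fin.ext rfl)
  · next h =>
    have hj : j = Fin.last n := Fin.ext (le_antisymm (Nat.le_of_lt_succ j.isLt) (le_of_not_gt h))
    subst hj
    rw [Fin.sum_univ_castSucc] at hsum
    simp only [phiMap_apply, mul_neg_one]
    rw [Finset.sum_neg_distrib]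
    linear_combination -hsum

lemma sum_stdGen : ∑ j : Fin (n + 1), stdGen p n j = 0 := by
  rw [Fin.sum_univ_castSucc]
  have h1 : ∑ i : Fin n, stdGen p n i.castSucc = fun _ => (1 : ZMod p) := by
    simp only [stdGen_castSucc]
    funext k
    simp [Finset.sum_apply, Pi.single_apply]
  rw [h1, stdGen_last]
  funext k
  simp

lemma phiMap_surjective (hp : p.Prime) {c : Fin n → ZMod p} (hc : c ≠ 0) :
    Function.Surjective (phiMap c) := by
  haveI := Fact.mk hp
  obtain ⟨i, hi⟩ : ∃ i, c i ≠ 0 := by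
    by_contra h; push_neg at h; exact hc (funext h)
  intro y
  exact ⟨Pi.single i ((c i)⁻¹ * y), by
    rw [phiMap_single, ← mul_assoc, mul_inv_cancel₀ hi, one_mul]⟩

lemma index_ker_phiMap (hp : p.Prime) {c : Fin n → ZMod p} (hc : c ≠ 0) :
    (phiMap c).ker.index = p := by
  haveI := Fact.mk hp
  rw [AddSubgroup.index_ker, AddMonoidHom.range_eq_top.2 (phiMap_surjective hp hc),
    AddSubgroup.card_top, Nat.card_zmod]

end Aux

section Aux2
variable {p n : ℕ}

lemma phiMap_coeff (hp : p.Prime) (φ : (Fin n → ZMod p) →+ ZMod p) (x : Fin n → ZMod p) :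
    (phiMap (fun i => φ (Pi.single i 1))) x = φ x := by
  haveI := Fact.mk hp
  rw [phiMap_apply]
  conv_rhs => rw [← Finset.univ_sum_single x, map_sum]
  refine Finset.sum_congr rfl fun i _ => ?_
  have h1 : Pi.single i (x i) = ((x i).val • Pi.single i (1 : ZMod p) : Fin n → ZMod p) := by
    funext j
    rw [Pi.smul_apply]
    rcases eq_or_ne j i with rfl | hne
    · rw [Pi.single_eq_same, Pi.single_eq_same, nsmul_eq_mul, mul_one, ZMod.natCast_val,
        ZMod.cast_id]
    · rw [Pi.single_eq_of_ne hne, Pi.single_eq_of_ne hne, smul_zero]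
  rw [h1, map_nsmul, nsmul_eq_mul, ZMod.natCast_val, ZMod.cast_id, mul_comm]

lemma phiMap_smul_coeff (a : ZMod p) (c x : Fin n → ZMod p) :
    phiMap (fun i => a * c i) x = a * phiMap c x := by
  simp [phiMap_apply, Finset.mul_sum, mul_assoc]

lemma exists_hom_ker (hp : p.Prime) (H : AddSubgroup (Fin n → ZMod p)) (hidx : H.index = p) :
    ∃ φ : (Fin n → ZMod p) →+ ZMod p, ∀ x, φ x = 0 ↔ x ∈ H := by
  haveI := Fact.mk hp
  have hcard : Nat.card ((Fin n → ZMod p) ⧸ H) = p := hidx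
  have htor : ∀ x : (Fin n → ZMod p) ⧸ H, (p : ℤ) • x = 0 := by
    intro x
    induction x using QuotientAddGroup.induction_on with
    | H v =>
      have h0 : (p : ℤ) • v = 0 := by
        funext i
        show (p : ℤ) • v i = 0
        rw [zsmul_eq_mul, Int.cast_natCast, ZMod.natCast_self, zero_mul]
      show (p : ℤ) • (QuotientAddGroup.mk' H v) = 0
      rw [← map_zsmul, h0, map_zero]
  haveI : Finite ((Fin n → ZMod p) ⧸ H) := Quotient.finite _
  haveI : Nontrivial ((Fin n → ZMod p) ⧸ H) :=
    Finite.one_lt_card_iff_nontrivial.mp (lt_of_lt_of_eq hp.one_lt hcard.symm)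
  obtain ⟨g, hg⟩ := exists_ne (0 : (Fin n → ZMod p) ⧸ H)
  set f : ℤ →+ ((Fin n → ZMod p) ⧸ H) := zmultiplesHom _ g with hf
  have hfp : f p = 0 := htor g
  set ψ : ZMod p →+ ((Fin n → ZMod p) ⧸ H) := ZMod.lift p ⟨f, hfp⟩ with hψ
  have hψ1 : ψ 1 = g := by
    have h1 : ψ (((1 : ℤ) : ZMod p)) = f 1 := ZMod.lift_coe p ⟨f, hfp⟩ 1
    rw [Int.cast_one] at h1
    rw [h1, hf, zmultiplesHom_apply, one_zsmul]
  have hinj : Function.Injective ψ := by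
    rw [injective_iff_map_eq_zero]
    intro a ha
    by_contra h
    apply hg
    have h2 : (1 : ZMod p) = (a⁻¹).val • a := by
      rw [nsmul_eq_mul, ZMod.natCast_val, ZMod.cast_id, inv_mul_cancel₀ h]
    rw [← hψ1, h2, map_nsmul, ha, smul_zero]
  have hbij : Function.Bijective ψ := by
    rw [Nat.bijective_iff_injective_and_card]
    exact ⟨hinj, by rw [Nat.card_zmod, hcard]⟩
  set e := AddEquiv.ofBijective ψ hbij with he
  refine ⟨e.symm.toAddMonoidHom.comp (QuotientAddGroup.mk' H), fun x => ?_⟩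
  show e.symm (QuotientAddGroup.mk' H x) = 0 ↔ x ∈ H
  rw [EmbeddingLike.map_eq_zero_iff]
  exact QuotientAddGroup.eq_zero_iff x

end Aux2
section Claim1
variable {p n : ℕ}

lemma coeff_ne_zero (hp : p.Prime) {d : Fin (n + 1) → ZMod p} {j₀ : Fin (n + 1)}
    (hsum : ∑ j, d j = 0) (hj1 : d j₀ = 1) :
    (fun i : Fin n => d i.castSucc) ≠ (0 : Fin n → ZMod p) := by
  haveI := Fact.mk hp
  intro hc
  have hall : ∀ j, d j = 0 := by
    intro j
    rcases lt_or_ge (j : ℕ) n with h | h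
    · have h2 := congrFun hc ⟨j, h⟩
      simp only [Pi.zero_apply] at h2
      have h3 : (⟨(j : ℕ), h⟩ : Fin n).castSucc = j := Fin.ext rfl
      rwa [h3] at h2
    · have hj : j = Fin.last n := Fin.ext (le_antisymm (Nat.le_of_lt_succ j.isLt) h)
      subst hj
      rw [Fin.sum_univ_castSucc] at hsum
      have h4 : ∑ i : Fin n, d i.castSucc = 0 :=
        Finset.sum_eq_zero fun i _ => by simpa using congrFun hc i
      rwa [h4, zero_add] at hsum
  rw [hall j₀] at hj1
  exact one_ne_zero hj1.symm

lemma card_Hset_eq (hp : p.Prime) (T : Finset (Fin (n + 1))) (j₀ : Fin (n + 1)) (hj₀ : j₀ ∉ T) :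
    Nat.card {H : AddSubgroup (Fin n → ZMod p) //
        H.index = p ∧ (∀ j ∈ T, stdGen p n j ∈ H) ∧
        (∀ j ∉ T, ∀ m : ZMod p, m ≠ 0 → m • stdGen p n j ∉ H)} =
    Nat.card {d : Fin (n + 1) → ZMod p //
        (∑ j, d j = 0) ∧ d j₀ = 1 ∧ (∀ j ∈ T, d j = 0) ∧ (∀ j ∉ T, d j ≠ 0)} := by
  haveI := Fact.mk hp
  have key : ∀ d : Fin (n + 1) → ZMod p, (∑ j, d j = 0) → d j₀ = 1 → (∀ j ∈ T, d j = 0) →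
      (∀ j ∉ T, d j ≠ 0) →
      ((phiMap (fun i => d i.castSucc)).ker.index = p ∧
        (∀ j ∈ T, stdGen p n j ∈ (phiMap (fun i => d i.castSucc)).ker) ∧
        (∀ j ∉ T, ∀ m : ZMod p, m ≠ 0 →
          m • stdGen p n j ∉ (phiMap (fun i => d i.castSucc)).ker)) := by
    intro d hsum hj1 hT hTc
    refine ⟨index_ker_phiMap hp (coeff_ne_zero hp hsum hj1), fun j hj => ?_, fun j hj m hm => ?_⟩
    · rw [AddMonoidHom.mem_ker, phiMap_stdGen d hsum, hT j hj]
    · rw [AddMonoidHom.mem_ker, phiMap_smul, phiMap_stdGen d hsum]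
      exact mul_ne_zero hm (hTc j hj)
  refine (Nat.card_eq_of_bijective
    (fun d : {d : Fin (n + 1) → ZMod p //
        (∑ j, d j = 0) ∧ d j₀ = 1 ∧ (∀ j ∈ T, d j = 0) ∧ (∀ j ∉ T, d j ≠ 0)} =>
      (⟨(phiMap (fun i => d.1 i.castSucc)).ker,
        key d.1 d.2.1 d.2.2.1 d.2.2.2.1 d.2.2.2.2⟩ :
      {H : AddSubgroup (Fin n → ZMod p) //
        H.index = p ∧ (∀ j ∈ T, stdGen p n j ∈ H) ∧
        (∀ j ∉ T, ∀ m : ZMod p, m ≠ 0 → m • stdGen p n j ∉ H)})) ⟨?_, ?_⟩).symm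
  · rintro ⟨d, hsum, hj1, hT, hTc⟩ ⟨d', hsum', hj1', hT', hTc'⟩ h
    simp only [Subtype.mk.injEq] at h
    have hkey : ∀ x, phiMap (fun i => d i.castSucc) x = phiMap (fun i => d' i.castSucc) x := by
      intro x
      have hmem : x - (phiMap (fun i => d i.castSucc) x) • stdGen p n j₀ ∈
          (phiMap (fun i => d i.castSucc)).ker := by
        rw [AddMonoidHom.mem_ker, map_sub, phiMap_smul, phiMap_stdGen d hsum, hj1, mul_one,
          sub_self]
      rw [h, AddMonoidHom.mem_ker, map_sub, phiMap_smul, phiMap_stdGen d' hsum', hj1', mul_one,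
        sub_eq_zero] at hmem
      exact hmem.symm
    apply Subtype.ext
    funext j
    show d j = d' j
    rw [← phiMap_stdGen d hsum j, ← phiMap_stdGen d' hsum' j]
    exact hkey _
  · rintro ⟨H, hidx, hT, hTc⟩
    obtain ⟨φ, hφ⟩ := exists_hom_ker hp H hidx
    have hu : φ (stdGen p n j₀) ≠ 0 := by
      intro h0
      exact hTc j₀ hj₀ 1 one_ne_zero (by rw [one_smul]; exact (hφ _).mp h0)
    set u := φ (stdGen p n j₀) with hu'
    set d : Fin (n + 1) → ZMod p := fun j => u⁻¹ * φ (stdGen p n j) with hd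
    have hsum : ∑ j, d j = 0 := by
      simp only [hd]
      rw [← Finset.mul_sum, ← map_sum, sum_stdGen, map_zero, mul_zero]
    have hj1 : d j₀ = 1 := inv_mul_cancel₀ hu
    have hTd : ∀ j ∈ T, d j = 0 := by
      intro j hj
      simp only [hd]
      rw [(hφ _).mpr (hT j hj), mul_zero]
    have hTcd : ∀ j ∉ T, d j ≠ 0 := by
      intro j hj
      have h5 : φ (stdGen p n j) ≠ 0 := fun h0 =>
        hTc j hj 1 one_ne_zero (by rw [one_smul]; exact (hφ _).mp h0)
      exact mul_ne_zero (inv_ne_zero hu) h5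
    refine ⟨⟨d, hsum, hj1, hTd, hTcd⟩, ?_⟩
    apply Subtype.ext
    show (phiMap (fun i => d i.castSucc)).ker = H
    ext x
    rw [AddMonoidHom.mem_ker]
    have hx : phiMap (fun i => d i.castSucc) x = u⁻¹ * φ x := by
      have hcoe : (fun i : Fin n => d i.castSucc) =
          fun i : Fin n => u⁻¹ * φ (Pi.single i 1) := by
        funext i
        simp only [hd]
        rw [stdGen_castSucc]
      calc phiMap (fun i => d i.castSucc) x
          = phiMap (fun i => u⁻¹ * φ (Pi.single i 1)) x := by rw [hcoe]
        _ = u⁻¹ * phiMap (fun i => φ (Pi.single i 1)) x := phiMap_smul_coeff _ _ _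
        _ = u⁻¹ * φ x := by rw [phiMap_coeff hp]
    rw [hx]
    constructor
    · intro h0
      rcases mul_eq_zero.mp h0 with h | h
      · exact absurd h (inv_ne_zero hu)
      · exact (hφ x).mp h
    · intro hxH
      rw [(hφ x).mpr hxH, mul_zero]

end Claim1
section Claim2
variable {p n : ℕ}

lemma natCast_val_eq (hp : p.Prime) (a : ZMod p) : ((a.val : ℕ) : ZMod p) = a := by
  haveI := Fact.mk hp
  rw [ZMod.natCast_val, ZMod.cast_id]

lemma single_eq_nsmul (hp : p.Prime) (i : Fin n) (t : ZMod p) :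
    Pi.single i t = (t.val • Pi.single i (1 : ZMod p) : Fin n → ZMod p) := by
  haveI := Fact.mk hp
  funext j
  rw [Pi.smul_apply]
  rcases eq_or_ne j i with rfl | hne
  · rw [Pi.single_eq_same, Pi.single_eq_same, nsmul_eq_mul, mul_one, ZMod.natCast_val,
      ZMod.cast_id]
  · rw [Pi.single_eq_of_ne hne, Pi.single_eq_of_ne hne, smul_zero]

lemma card_Sd_eq (hp : p.Prime) (T : Finset (Fin (n + 1))) (j₀ : Fin (n + 1)) (hj₀ : j₀ ∉ T) :
    Nat.card {d : Fin (n + 1) → ZMod p //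
        (∑ j, d j = 0) ∧ d j₀ = 1 ∧ (∀ j ∈ T, d j = 0) ∧ (∀ j ∉ T, d j ≠ 0)} =
    psi p (n + 1 - T.card) := by
  haveI := Fact.mk hp
  set r := n + 1 - T.card with hr
  set E : Finset (Fin (n + 1)) := Tᶜ.erase j₀ with hEdef
  have hj₀c : j₀ ∈ Tᶜ := Finset.mem_compl.mpr hj₀
  have hE : E.card = r - 1 := by
    rw [hEdef, Finset.card_erase_of_mem hj₀c, Finset.card_compl, Fintype.card_fin]
  have hj₀E : j₀ ∉ E := Finset.notMem_erase _ _
  set eq : {x // x ∈ E} ≃ Fin (r - 1) := Finset.equivFinOfCardEq hE with heq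
  -- the forward map from psi-tuples to coefficient vectors
  set D : (Fin (r - 1) → (Finset.Icc 1 (p - 1))) → (Fin (n + 1) → ZMod p) :=
    fun f j => if h : j ∈ E then (((f (eq ⟨j, h⟩) : ℕ) : ZMod p)) else if j = j₀ then 1 else 0
    with hD
  have hD_E : ∀ f j (h : j ∈ E), D f j = ((f (eq ⟨j, h⟩) : ℕ) : ZMod p) := by
    intro f j h; exact dif_pos h
  have hD_j₀ : ∀ f, D f j₀ = 1 := by
    intro f
    show (if h : j₀ ∈ E then (((f (eq ⟨j₀, h⟩) : ℕ) : ZMod p)) else if j₀ = j₀ then 1 else 0) = 1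
    rw [dif_neg hj₀E, if_pos rfl]
  have hD_T : ∀ f, ∀ j ∈ T, D f j = 0 := by
    intro f j hj
    have h1 : j ∉ E := fun h => (Finset.mem_compl.mp (Finset.mem_of_mem_erase h)) hj
    have h2 : j ≠ j₀ := fun h => hj₀ (h ▸ hj)
    show (if h : j ∈ E then (((f (eq ⟨j, h⟩) : ℕ) : ZMod p)) else if j = j₀ then 1 else 0) = 0
    rw [dif_neg h1, if_neg h2]
  have cast_ne : ∀ v : ℕ, 1 ≤ v → v ≤ p - 1 → ((v : ℕ) : ZMod p) ≠ 0 := by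
    intro v h1 h2 h0
    have := (ZMod.natCast_eq_zero_iff v p).mp h0
    have := Nat.le_of_dvd (by omega) this
    have := hp.two_le
    omega
  have hD_Tc : ∀ f, ∀ j ∉ T, D f j ≠ 0 := by
    intro f j hj
    rcases eq_or_ne j j₀ with rfl | hne
    · rw [hD_j₀]; exact one_ne_zero
    · have hjE : j ∈ E := Finset.mem_erase.mpr ⟨hne, Finset.mem_compl.mpr hj⟩
      rw [hD_E f j hjE]
      obtain ⟨h1, h2⟩ := Finset.mem_Icc.mp (f (eq ⟨j, hjE⟩)).2
      exact cast_ne _ h1 h2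
  have hD_sum : ∀ f, ∑ j, D f j = (((∑ k, ((f k : ℕ)) : ℕ) : ZMod p)) + 1 := by
    intro f
    rw [← Finset.sum_add_sum_compl E (D f)]
    have hA : ∑ j ∈ E, D f j = (((∑ k, ((f k : ℕ)) : ℕ) : ZMod p)) := by
      rw [← Finset.sum_attach E (D f)]
      rw [show ∑ x ∈ E.attach, D f x.1 = ∑ x : {x // x ∈ E}, ((f (eq x) : ℕ) : ZMod p) from
        Finset.sum_congr (by rw [Finset.univ_eq_attach]) (fun x _ => hD_E f x.1 x.2)]
      rw [Equiv.sum_comp eq (fun k => ((f k : ℕ) : ZMod p)), Nat.cast_sum]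
    have hB : ∑ j ∈ Eᶜ, D f j = 1 := by
      have : ∀ j ∈ Eᶜ, D f j = if j = j₀ then 1 else 0 := by
        intro j hj
        exact dif_neg (Finset.mem_compl.mp hj)
      rw [Finset.sum_congr rfl this, Finset.sum_ite_eq' Eᶜ j₀ (fun _ => (1 : ZMod p)),
        if_pos (Finset.mem_compl.mpr hj₀E)]
    rw [hA, hB]
  have key : ∀ f : Fin (r - 1) → (Finset.Icc 1 (p - 1)),
      p ∣ (∑ k, ((f k : ℕ))) + 1 →
      ((∑ j, D f j = 0) ∧ D f j₀ = 1 ∧ (∀ j ∈ T, D f j = 0) ∧ (∀ j ∉ T, D f j ≠ 0)) := by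
    intro f hf
    refine ⟨?_, hD_j₀ f, hD_T f, hD_Tc f⟩
    rw [hD_sum f]
    have h8 := (ZMod.natCast_eq_zero_iff ((∑ k, ((f k : ℕ))) + 1) p).mpr hf
    rwa [Nat.cast_add, Nat.cast_one] at h8
  refine (Nat.card_eq_of_bijective
    (fun f : {f : Fin (r - 1) → (Finset.Icc 1 (p - 1)) // p ∣ (∑ j, ((f j : ℕ))) + 1} =>
      (⟨D f.1, key f.1 f.2⟩ : {d : Fin (n + 1) → ZMod p //
        (∑ j, d j = 0) ∧ d j₀ = 1 ∧ (∀ j ∈ T, d j = 0) ∧ (∀ j ∉ T, d j ≠ 0)})) ⟨?_, ?_⟩).symm.trans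
    (Nat.card_eq_fintype_card)
  · rintro ⟨f, hf⟩ ⟨f', hf'⟩ h
    simp only [Subtype.mk.injEq] at h
    apply Subtype.ext
    funext k
    apply Subtype.ext
    have hx := (eq.symm k).2
    have h1 := congrFun h (eq.symm k).1
    rw [hD_E f _ hx, hD_E f' _ hx] at h1
    have he : eq ⟨(eq.symm k).1, hx⟩ = k := by
      rw [show (⟨(eq.symm k).1, hx⟩ : {x // x ∈ E}) = eq.symm k from Subtype.ext rfl]
      exact eq.apply_symm_apply k
    rw [he] at h1
    have hb : ∀ g : Fin (r - 1) → (Finset.Icc 1 (p - 1)), ((g k : ℕ)) < p := by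
      intro g
      obtain ⟨_, h2⟩ := Finset.mem_Icc.mp (g k).2
      have := hp.two_le; omega
    have := congrArg ZMod.val h1
    rwa [ZMod.val_cast_of_lt (hb f), ZMod.val_cast_of_lt (hb f')] at this
  · rintro ⟨d, hsum, hj1, hT, hTc⟩
    have hdE : ∀ j ∈ E, d j ≠ 0 := by
      intro j hj
      exact hTc j (fun hjT => absurd (Finset.mem_compl.mp (Finset.mem_of_mem_erase hj)) (not_not_intro hjT))
    have hval : ∀ j ∈ E, 1 ≤ (d j).val ∧ (d j).val ≤ p - 1 := by
      intro j hj
      have h1 : (d j).val ≠ 0 := fun h => hdE j hj (by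
        rwa [ZMod.val_eq_zero] at h)
      have h2 : (d j).val < p := ZMod.val_lt _
      omega
    set f : Fin (r - 1) → (Finset.Icc 1 (p - 1)) :=
      fun k => ⟨(d (eq.symm k).1).val,
        Finset.mem_Icc.mpr ⟨(hval _ (eq.symm k).2).1, (hval _ (eq.symm k).2).2⟩⟩ with hfdef
    have hsum2 : ((((∑ k, ((f k : ℕ))) + 1 : ℕ)) : ZMod p) = 0 := by
      push_cast
      have h3 : ∀ k, (((f k : ℕ)) : ZMod p) = d (eq.symm k).1 := by
        intro k
        rw [hfdef]
        exact natCast_val_eq hp _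
      rw [Finset.sum_congr rfl (fun k _ => h3 k)]
      have h4 : ∑ k, d (eq.symm k).1 = ∑ j ∈ E, d j := by
        rw [Equiv.sum_comp eq.symm (fun x : {x // x ∈ E} => d x.1), ← Finset.sum_attach E d]
        exact Finset.sum_congr (Finset.univ_eq_attach E) (fun _ _ => rfl)
      rw [h4]
      have h5 : ∑ j ∈ E, d j + d j₀ = ∑ j ∈ Tᶜ, d j := by
        rw [add_comm, hEdef, ← Finset.sum_insert (Finset.notMem_erase j₀ Tᶜ)]
        rw [Finset.insert_erase hj₀c]
      have h6 : ∑ j ∈ Tᶜ, d j = 0 := by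
        have h7 := Finset.sum_add_sum_compl Tᶜ d
        rw [compl_compl, hsum, Finset.sum_eq_zero hT, add_zero] at h7
        exact h7
      rw [← hj1, h5, h6]
    refine ⟨⟨f, ?_⟩, ?_⟩
    · exact (ZMod.natCast_eq_zero_iff _ p).mp hsum2
    · apply Subtype.ext
      funext j
      show D f j = d j
      by_cases hjE : j ∈ E
      · rw [hD_E f j hjE]
        have he2 : eq.symm (eq ⟨j, hjE⟩) = ⟨j, hjE⟩ := eq.symm_apply_apply _
        rw [hfdef]
        show (((d (eq.symm (eq ⟨j, hjE⟩)).1).val : ℕ) : ZMod p) = d j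
        rw [he2]
        exact natCast_val_eq hp _
      · rcases eq_or_ne j j₀ with rfl | hne
        · rw [hD_j₀, hj1]
        · have hjT : j ∈ T := by
            by_contra hjT
            exact hjE (Finset.mem_erase.mpr ⟨hne, Finset.mem_compl.mpr hjT⟩)
          rw [hD_T f j hjT, hT j hjT]

end Claim2
end

/-- In G = (ℤ/p)ⁿ (p prime), the number of index-p subgroups H containing a_j exactly
for j in a fixed subset T ⊆ {1,…,n+1} of size n+1−r (and containing no nontrivial
multiple of a_j for j ∉ T) equals ψ_p(r), r = n+1−|T|. -/
theorem count_index_p_subgroups (p n : ℕ) (hp : p.Prime) (hn : 2 ≤ n)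
    (T : Finset (Fin (n + 1))) :
    Nat.card {H : AddSubgroup (Fin n → ZMod p) //
        H.index = p ∧ (∀ j ∈ T, stdGen p n j ∈ H) ∧
        (∀ j ∉ T, ∀ m : ZMod p, m ≠ 0 → m • stdGen p n j ∉ H)} =
      psi p (n + 1 - T.card) := by
  haveI := Fact.mk hp
  by_cases hT : T = Finset.univ
  · subst hT
    have hR : psi p (n + 1 - (Finset.univ : Finset (Fin (n + 1))).card) = 0 := by
      rw [Finset.card_univ, Fintype.card_fin, Nat.sub_self, psi, Fintype.card_eq_zero_iff]
      constructor
      rintro ⟨f, hf⟩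
      have h0 : (∑ j : Fin (0 - 1), ((f j : ℕ))) = 0 := by simp
      rw [h0, zero_add] at hf
      have h1 := Nat.le_of_dvd one_pos hf
      have h2 := hp.two_le
      omega
    rw [hR, Nat.card_eq_zero]
    left
    constructor
    rintro ⟨H, hidx, hTmem, _⟩
    have htop : H = ⊤ := by
      rw [eq_top_iff]
      intro x _
      have hsingle : ∀ i : Fin n, Pi.single i (1 : ZMod p) ∈ H := fun i => by
        have h1 := hTmem i.castSucc (Finset.mem_univ _)
        rwa [stdGen_castSucc] at h1
      have hx : x = ∑ i, Pi.single i (x i) := (Finset.univ_sum_single x).symm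
      rw [hx]
      refine AddSubgroup.sum_mem H (fun i _ => ?_)
      rw [single_eq_nsmul hp]
      exact AddSubgroup.nsmul_mem H (hsingle i) _
    rw [htop, AddSubgroup.index_top] at hidx
    exact hp.one_lt.ne hidx
  · obtain ⟨j₀, hj₀⟩ : ∃ j₀, j₀ ∉ T := by
      by_contra h
      push_neg at h
      exact hT (Finset.eq_univ_iff_forall.mpr h)
    rw [card_Hset_eq hp T j₀ hj₀, card_Sd_eq hp T j₀ hj₀]
end

section
/- Let p be prime, r ≥ 2, and consider a surjective homomorphism φ: (ℤ/p)^r → ℤ/p with φ(e_j) ≠ 0 for all standard basis vectors e_j and φ(e₁+⋯+e_r) = 0. Two such homomorphisms φ, φ' have equal kernel if and only if φ' = uφ for some unit u ∈ (ℤ/p)^×, and the number of distinct kernels is ψ_p(r) = (−1)^{r+1}((1−p)^{r−1}−1)/p. -/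
open Finset

section helpers
variable {p : ℕ} [Fact p.Prime] {n : ℕ}

lemma map_zmod_smul (φ : (Fin n → ZMod p) →+ ZMod p) (c : ZMod p) (v : Fin n → ZMod p) :
    φ (c • v) = c * φ v := by
  have h1 : c • v = (c.val : ℕ) • v := by
    rw [← Nat.cast_smul_eq_nsmul (ZMod p), ZMod.natCast_val, ZMod.cast_id]
  rw [h1, AddMonoidHom.map_nsmul, nsmul_eq_mul, ZMod.natCast_val, ZMod.cast_id]

lemma hom_eval (φ : (Fin n → ZMod p) →+ ZMod p) (x : Fin n → ZMod p) :
    φ x = ∑ j, x j * φ (Pi.single j 1) := by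
  conv_lhs => rw [← Finset.univ_sum_single x]
  rw [map_sum]
  refine Finset.sum_congr rfl fun j _ => ?_
  have : Pi.single j (x j) = x j • (Pi.single j 1 : Fin n → ZMod p) := by
    rw [← Pi.single_smul, smul_eq_mul, mul_one]
  rw [this, map_zmod_smul]

lemma ker_eq_iff_unit (φ φ' : (Fin n → ZMod p) →+ ZMod p)
    (hs : Function.Surjective φ) (hs' : Function.Surjective φ') :
    φ.ker = φ'.ker ↔ ∃ u : (ZMod p)ˣ, ∀ x, φ' x = (u : ZMod p) * φ x := by
  constructor
  · intro hk
    obtain ⟨x₀, hx₀⟩ := hs 1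
    have hc : φ' x₀ ≠ 0 := by
      intro h0
      have : x₀ ∈ φ.ker := hk ▸ (by simpa [AddMonoidHom.mem_ker] using h0)
      rw [AddMonoidHom.mem_ker, hx₀] at this
      exact one_ne_zero this
    refine ⟨Units.mk0 _ hc, fun x => ?_⟩
    have hmem : x - φ x • x₀ ∈ φ.ker := by
      rw [AddMonoidHom.mem_ker, map_sub, map_zmod_smul, hx₀, mul_one, sub_self]
    rw [hk, AddMonoidHom.mem_ker, map_sub, map_zmod_smul, sub_eq_zero] at hmem
    rw [hmem, Units.val_mk0, mul_comm]
  · rintro ⟨u, hu⟩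
    ext x
    simp only [AddMonoidHom.mem_ker, hu]
    constructor
    · intro h; rw [h, mul_zero]
    · intro h; exact (Units.mul_right_eq_zero u).mp h

/-- the linear functional with coefficients α -/
def lfun (α : Fin n → ZMod p) : (Fin n → ZMod p) →+ ZMod p where
  toFun x := ∑ j, α j * x j
  map_zero' := by simp
  map_add' x y := by simp [mul_add, Finset.sum_add_distrib]

lemma lfun_apply (α x : Fin n → ZMod p) : lfun α x = ∑ j, α j * x j := rfl

lemma lfun_single (α : Fin n → ZMod p) (j : Fin n) : lfun α (Pi.single j 1) = α j := by
  rw [lfun_apply]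
  simp [Pi.single_apply, mul_ite]

lemma lfun_surj (α : Fin n → ZMod p) (j : Fin n) (hj : α j ≠ 0) :
    Function.Surjective (lfun α) := by
  intro y
  refine ⟨(y * (α j)⁻¹) • (Pi.single j 1 : Fin n → ZMod p), ?_⟩
  rw [map_zmod_smul, lfun_single]
  field_simp

end helpers

section count
variable {p : ℕ} [Fact p.Prime]

lemma card_nonzero (n : ℕ) :
    Nat.card {g : Fin n → ZMod p // ∀ j, g j ≠ 0} = (p - 1) ^ n := by
  classical
  rw [Nat.card_eq_fintype_card,
    Fintype.card_congr (Equiv.subtypePiEquivPi (p := fun (_ : Fin n) (b : ZMod p) => b ≠ 0)),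
    Fintype.card_pi]
  have h : Fintype.card {b : ZMod p // b ≠ 0} = p - 1 := by
    rw [Fintype.card_subtype_compl, ZMod.card, Fintype.card_subtype_eq]
  simp [h]

lemma card_step (n : ℕ) :
    Nat.card {g : Fin (n+1) → ZMod p // (∀ j, g j ≠ 0) ∧ ∑ j, g j = -1}
      + Nat.card {g : Fin n → ZMod p // (∀ j, g j ≠ 0) ∧ ∑ j, g j = -1} = (p - 1) ^ n := by
  classical
  have e : {g : Fin (n+1) → ZMod p // (∀ j, g j ≠ 0) ∧ ∑ j, g j = -1}
      ≃ {g : Fin n → ZMod p // (∀ j, g j ≠ 0) ∧ ¬ (∑ j, g j = -1)} := by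
    refine
      { toFun := fun g => ⟨Fin.init g.1, fun j => g.2.1 _, ?_⟩
        invFun := fun g' => ⟨Fin.snoc g'.1 (-1 - ∑ j, g'.1 j), ?_, ?_⟩
        left_inv := ?_, right_inv := ?_ }
    · obtain ⟨g, hnz, hsum⟩ := g
      intro hbad
      rw [Fin.sum_univ_castSucc] at hsum
      have : g (Fin.last n) = 0 := by
        have : ∑ i : Fin n, g i.castSucc = -1 := hbad
        rw [this] at hsum; linear_combination hsum
      exact hnz _ this
    · obtain ⟨g', hnz, hne⟩ := g'
      intro j
      refine Fin.lastCases ?_ ?_ j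
      · rw [Fin.snoc_last]
        intro h
        exact hne (by linear_combination -h)
      · intro i
        rw [Fin.snoc_castSucc]
        exact hnz i
    · obtain ⟨g', hnz, hne⟩ := g'
      rw [Fin.sum_univ_castSucc]
      simp only [Fin.snoc_castSucc, Fin.snoc_last]
      ring
    · rintro ⟨g, hnz, hsum⟩
      ext j
      simp only
      have hlast : -1 - ∑ j : Fin n, Fin.init g j = g (Fin.last n) := by
        rw [Fin.sum_univ_castSucc] at hsum
        have : ∑ i : Fin n, Fin.init g i = ∑ i : Fin n, g i.castSucc := rfl
        rw [this]; linear_combination -hsum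
      rw [hlast, Fin.snoc_init_self]
    · rintro ⟨g', hnz, hne⟩
      ext j
      simp [Fin.init_snoc]
  rw [Nat.card_congr e, ← card_nonzero (p := p) n]
  rw [Nat.card_eq_fintype_card, Nat.card_eq_fintype_card, Nat.card_eq_fintype_card,
    Fintype.card_subtype, Fintype.card_subtype, Fintype.card_subtype]
  have h := Finset.card_filter_add_card_filter_not
    (s := (univ : Finset (Fin n → ZMod p)).filter (fun g => ∀ j, g j ≠ 0))
    (p := fun g => ∑ j, g j = -1)
  rw [Finset.filter_filter, Finset.filter_filter] at h
  rw [add_comm]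
  exact h

lemma card_int (hp1 : 1 ≤ p) : ∀ n : ℕ,
    (Nat.card {g : Fin n → ZMod p // (∀ j, g j ≠ 0) ∧ ∑ j, g j = -1} : ℤ) * p
      = ((p : ℤ) - 1) ^ n - (-1) ^ n := by
  intro n
  induction n with
  | zero =>
    have : IsEmpty {g : Fin 0 → ZMod p // (∀ j, g j ≠ 0) ∧ ∑ j, g j = -1} := by
      constructor
      rintro ⟨g, -, hsum⟩
      simp only [Finset.univ_eq_empty, Finset.sum_empty] at hsum
      have : (1 : ZMod p) = 0 := by linear_combination hsum
      exact one_ne_zero this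
    rw [Nat.card_of_isEmpty]
    simp
  | succ n ih =>
    have h := card_step (p := p) n
    have hcast : (Nat.card {g : Fin (n+1) → ZMod p // (∀ j, g j ≠ 0) ∧ ∑ j, g j = -1} : ℤ)
        + (Nat.card {g : Fin n → ZMod p // (∀ j, g j ≠ 0) ∧ ∑ j, g j = -1} : ℤ)
        = ((p : ℤ) - 1) ^ n := by
      have := congrArg (Nat.cast (R := ℤ)) h
      push_cast [Nat.cast_sub hp1] at this
      exact this
    linear_combination (p : ℤ) * hcast - ih

end count
/-- Surjective homomorphisms (ℤ/p)^r → ℤ/p that are nonzero on each standard basis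
vector and vanish on e₁+⋯+e_r: two such homomorphisms have the same kernel iff they
differ by a unit of ℤ/p, and the number of distinct kernels is
ψ_p(r) = (−1)^{r+1}((1−p)^{r−1}−1)/p (stated multiplied through by p). -/
theorem kernels_of_admissible_surjections (p r : ℕ) (hp : p.Prime) (hr : 2 ≤ r) :
    (∀ φ φ' : (Fin r → ZMod p) →+ ZMod p,
      Function.Surjective φ → (∀ j, φ (Pi.single j 1) ≠ 0) → φ (fun _ => 1) = 0 →
      Function.Surjective φ' → (∀ j, φ' (Pi.single j 1) ≠ 0) → φ' (fun _ => 1) = 0 →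
      (φ.ker = φ'.ker ↔ ∃ u : (ZMod p)ˣ, ∀ x, φ' x = (u : ZMod p) * φ x)) ∧
    (Nat.card {K : AddSubgroup (Fin r → ZMod p) //
        ∃ φ : (Fin r → ZMod p) →+ ZMod p,
          Function.Surjective φ ∧ (∀ j, φ (Pi.single j 1) ≠ 0) ∧
          φ (fun _ => 1) = 0 ∧ φ.ker = K} : ℤ) * p =
      (-1) ^ (r + 1) * ((1 - (p : ℤ)) ^ (r - 1) - 1) := by
  haveI : Fact p.Prime := ⟨hp⟩
  constructor
  · intro φ φ' hs _ _ hs' _ _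
    exact ker_eq_iff_unit φ φ' hs hs'
  · obtain ⟨n, rfl⟩ : ∃ n, r = n + 1 := ⟨r - 1, by omega⟩
    -- properties of lfun for admissible tuples
    have key : ∀ a : {α : Fin (n+1) → ZMod p //
          α 0 = 1 ∧ (∀ j, α j ≠ 0) ∧ ∑ j, α j = 0},
        Function.Surjective (lfun a.1) ∧ (∀ j, (lfun a.1) (Pi.single j 1) ≠ 0) ∧
          (lfun a.1) (fun _ => 1) = 0 := by
      rintro ⟨α, h0, hnz, hsum⟩
      refine ⟨lfun_surj α 0 (hnz 0), fun j => by rw [lfun_single]; exact hnz j, ?_⟩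
      rw [lfun_apply]
      simpa using hsum
    -- Step 1: kernels ↔ normalized tuples
    have h1 : Nat.card {α : Fin (n+1) → ZMod p //
          α 0 = 1 ∧ (∀ j, α j ≠ 0) ∧ ∑ j, α j = 0}
        = Nat.card {K : AddSubgroup (Fin (n+1) → ZMod p) //
            ∃ φ : (Fin (n+1) → ZMod p) →+ ZMod p,
              Function.Surjective φ ∧ (∀ j, φ (Pi.single j 1) ≠ 0) ∧
              φ (fun _ => 1) = 0 ∧ φ.ker = K} := by
      refine Nat.card_eq_of_bijective
        (fun a => ⟨(lfun a.1).ker, lfun a.1, (key a).1, (key a).2.1, (key a).2.2, rfl⟩)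
        ⟨?_, ?_⟩
      · rintro ⟨α, h0, hnz, hsum⟩ ⟨β, h0', hnz', hsum'⟩ hab
        have hker : (lfun α).ker = (lfun β).ker := congrArg Subtype.val hab
        obtain ⟨u, hu⟩ := (ker_eq_iff_unit (lfun α) (lfun β)
          (lfun_surj α 0 (hnz 0)) (lfun_surj β 0 (hnz' 0))).mp hker
        have hu0 : (u : ZMod p) = 1 := by
          have := hu (Pi.single 0 1)
          rw [lfun_single, lfun_single, h0, h0', mul_one] at this
          exact this.symm
        refine Subtype.ext (funext fun j => ?_)
        have := hu (Pi.single j 1)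
        rw [lfun_single, lfun_single, hu0, one_mul] at this
        exact this.symm
      · rintro ⟨K, φ, hsurj, hnz, hsum, hker⟩
        set c := φ (Pi.single 0 1) with hc
        have hc0 : c ≠ 0 := hnz 0
        set α : Fin (n+1) → ZMod p := fun j => c⁻¹ * φ (Pi.single j 1) with hα
        have hα0 : α 0 = 1 := inv_mul_cancel₀ hc0
        have hαnz : ∀ j, α j ≠ 0 := fun j => mul_ne_zero (inv_ne_zero hc0) (hnz j)
        have hαsum : ∑ j, α j = 0 := by
          have hone : ∑ j : Fin (n+1), (Pi.single j 1 : Fin (n+1) → ZMod p)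
              = (fun _ => 1) := by
            simpa using Finset.univ_sum_single (fun _ : Fin (n+1) => (1 : ZMod p))
          calc ∑ j, α j = c⁻¹ * ∑ j, φ (Pi.single j 1) := by
                rw [Finset.mul_sum]
            _ = c⁻¹ * φ (fun _ => 1) := by rw [← map_sum, hone]
            _ = 0 := by rw [hsum, mul_zero]
        have heq : ∀ x, lfun α x = c⁻¹ * φ x := by
          intro x
          rw [lfun_apply, hom_eval φ x, Finset.mul_sum]
          exact Finset.sum_congr rfl fun j _ => by rw [hα]; ring
        have hkerα : (lfun α).ker = K := by
          rw [← hker]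
          ext x
          simp only [AddMonoidHom.mem_ker, heq]
          constructor
          · intro h
            rcases mul_eq_zero.mp h with h' | h'
            · exact absurd h' (inv_ne_zero hc0)
            · exact h'
          · intro h; rw [h, mul_zero]
        exact ⟨⟨α, hα0, hαnz, hαsum⟩, Subtype.ext hkerα⟩
    -- Step 2: normalized tuples ↔ (r-1)-tuples summing to -1
    have h2 : Nat.card {g : Fin n → ZMod p // (∀ j, g j ≠ 0) ∧ ∑ j, g j = -1}
        = Nat.card {α : Fin (n+1) → ZMod p //
            α 0 = 1 ∧ (∀ j, α j ≠ 0) ∧ ∑ j, α j = 0} := by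
      have keyc : ∀ b : {g : Fin n → ZMod p // (∀ j, g j ≠ 0) ∧ ∑ j, g j = -1},
          (Fin.cons 1 b.1 : Fin (n+1) → ZMod p) 0 = 1 ∧
            (∀ j, (Fin.cons 1 b.1 : Fin (n+1) → ZMod p) j ≠ 0) ∧
            ∑ j, (Fin.cons 1 b.1 : Fin (n+1) → ZMod p) j = 0 := by
        rintro ⟨g, hnz, hsum⟩
        refine ⟨Fin.cons_zero _ _, fun j => ?_, ?_⟩
        · refine Fin.cases ?_ ?_ j
          · rw [Fin.cons_zero]; exact one_ne_zero
          · intro i; rw [Fin.cons_succ]; exact hnz i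
        · rw [Fin.sum_univ_succ, Fin.cons_zero]
          simp only [Fin.cons_succ]
          rw [hsum]; ring
      refine Nat.card_eq_of_bijective
        (fun b => ⟨Fin.cons 1 b.1, keyc b⟩) ⟨?_, ?_⟩
      · rintro ⟨g, hg⟩ ⟨g', hg'⟩ h
        have : (Fin.cons 1 g : Fin (n+1) → ZMod p) = Fin.cons 1 g' :=
          congrArg Subtype.val h
        refine Subtype.ext ?_
        have := congrArg Fin.tail this
        rwa [Fin.tail_cons, Fin.tail_cons] at this
      · rintro ⟨α, h0, hnz, hsum⟩
        have htail : ∑ j, Fin.tail α j = -1 := by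
          rw [Fin.sum_univ_succ, h0] at hsum
          have : ∑ i : Fin n, Fin.tail α i = ∑ i : Fin n, α i.succ := rfl
          rw [this]; linear_combination hsum
        refine ⟨⟨Fin.tail α, fun j => hnz j.succ, htail⟩, Subtype.ext ?_⟩
        simp only
        rw [← h0, Fin.cons_self_tail]
    rw [← h1, ← h2]
    have h3 := card_int (p := p) hp.one_le n
    have hsq : (-1 : ℤ) ^ n * (-1 : ℤ) ^ n = 1 := by
      rw [← mul_pow]; norm_num
    simp only [Nat.add_sub_cancel]
    rw [show (1 - (p : ℤ)) = -1 * ((p : ℤ) - 1) by ring, mul_pow]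
    rw [show n + 1 + 1 = n + 2 by ring, pow_add]
    rw [show ((-1:ℤ))^2 = 1 by norm_num, mul_one]
    linear_combination h3 - ((p : ℤ) - 1) ^ n * hsq
end
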